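/- Let x, y be free with amalgamation over B with E[x], E[y] invertible. Then Φ^{y→}∘χ_{xy} = S_y^{-1}·(1+I), where Φ^{y→} = Σ_{n≥0} E[y b_1 xy b_2 ··· b_n xy] and χ_{xy} is the compositional inverse of I·Φ_{xy}. -/

import Mathlib

open scoped BigOperators

/-- A multilinear function series over `B`: a sequence of `n`-ary `B`-valued functions
(multilinearity is imposed separately via `MLS.IsMultilinear`). -/
abbrev MLS (B : Type*) : Type _ := ∀ n : ℕ, (Fin n → B) → B

namespace MLS

variable {B : Type*}

/-- The constant term `F₀` of a multilinear function series. -/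
def const (F : MLS B) : B := F 0 Fin.elim0

/-- `F` is a multilinear function series (over the base ring `R`): every component
agrees with an `R`-multilinear map. -/
def IsMultilinear (R : Type*) [CommRing R] {B : Type*} [Ring B] [Algebra R B]
    (F : MLS B) : Prop :=
  ∀ n : ℕ, ∃ M : MultilinearMap R (fun _ : Fin n => B) B, ∀ b : Fin n → B, M b = F n b

/-- Componentwise sum of multilinear function series. -/
def add [Ring B] (F G : MLS B) : MLS B := fun n b => F n b + G n b

/-- Dykema's product of multilinear function series:
`(F·G)ₙ(b₁,…,bₙ) = ∑ₖ Fₖ(b₁,…,bₖ)·G_{n-k}(b_{k+1},…,bₙ)`. -/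
def mul [Ring B] (F G : MLS B) : MLS B := fun n b =>
  ∑ k : Fin (n + 1),
    F k.val (fun i : Fin k.val => b (Fin.castLE (Nat.lt_succ_iff.mp k.isLt) i)) *
      G (n - k.val) (fun i : Fin (n - k.val) =>
        b ⟨k.val + i.val, by have h1 := i.isLt; have h2 := k.isLt; omega⟩)

/-- The unit series `1`, with constant term `1` and vanishing higher terms. -/
def one [Ring B] : MLS B := fun n _ => if n = 0 then 1 else 0

/-- The identity series `I`, with `I₁(b) = b` and all other components zero. -/
def idS [Ring B] : MLS B := fun n b => if h : n = 1 then b ⟨0, by omega⟩ else 0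

/-- Composition of multilinear function series (appropriate when `const G = 0`):
`(F∘G)ₙ(b₁,…,bₙ) = ∑_{p₁+⋯+p_k=n, pᵢ ≥ 1} F_k(G_{p₁}(…), …, G_{p_k}(…))`,
with `(F∘G)₀ = F₀`. -/
def comp [Ring B] (F G : MLS B) : MLS B := fun n b =>
  ∑ c : Composition n,
    F c.length (fun i : Fin c.length =>
      G (c.blocksFun i) (fun j : Fin (c.blocksFun i) => b (c.embedding i j)))

end MLS

/-- An operator-valued probability space: a unital algebra `A` with a distinguished
unital subalgebra (given by the embedding `ι : B →ₐ[R] A`) and a conditional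
expectation `E : A → B`. -/
structure OVPS (R A B : Type*) [CommRing R] [Ring A] [Algebra R A] [Ring B] [Algebra R B] where
  ι : B →ₐ[R] A
  E : A →ₗ[R] B
  E_ι : ∀ b : B, E (ι b) = b
  E_bimodule : ∀ (b₁ b₂ : B) (a : A), E (ι b₁ * a * ι b₂) = b₁ * E a * b₂

/-- The operator-valued moment series `Φ_x = ∑ₙ E[x b₁ x ⋯ bₙ x]` of a random variable. -/
def OVPS.momentSeries {R A B : Type*} [CommRing R] [Ring A] [Algebra R A] [Ring B] [Algebra R B]
    (P : OVPS R A B) (x : A) : MLS B :=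
  fun n b => P.E (x * (List.ofFn fun i : Fin n => P.ι (b i) * x).prod)

/-- The series `Φ^{→x} = ∑ₙ E[xy b₁ xy b₂ ⋯ xy bₙ x]`. -/
def OVPS.momentSeriesToX {R A B : Type*} [CommRing R] [Ring A] [Algebra R A]
    [Ring B] [Algebra R B] (P : OVPS R A B) (x y : A) : MLS B :=
  fun n b => P.E ((List.ofFn fun i : Fin n => x * y * P.ι (b i)).prod * x)

/-- The series `Φ^{y→} = ∑ₙ E[y b₁ xy b₂ xy ⋯ bₙ xy]`. -/
def OVPS.momentSeriesYTo {R A B : Type*} [CommRing R] [Ring A] [Algebra R A]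
    [Ring B] [Algebra R B] (P : OVPS R A B) (x y : A) : MLS B :=
  fun n b => P.E (y * (List.ofFn fun i : Fin n => P.ι (b i) * (x * y)).prod)


section Aux

namespace MLS

variable {B : Type*} [Ring B]

lemma congr_arity (F : MLS B) {m n : ℕ} (h : m = n) (b : Fin m → B) (c : Fin n → B)
    (hb : ∀ (i : ℕ) (hm : i < m) (hn : i < n), b ⟨i, hm⟩ = c ⟨i, hn⟩) : F m b = F n c := by
  subst h
  congr 1
  funext i
  simpa using hb i i.2 i.2

lemma one_mul' (F : MLS B) : MLS.one.mul F = F := by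
  funext n b
  simp only [MLS.mul, MLS.one]
  rw [Fintype.sum_eq_single (0 : Fin (n + 1))]
  · simp only [Fin.val_zero]
    rw [if_pos trivial, one_mul]
    exact congr_arity F (by omega) _ _ (fun i hm hn => congrArg b (Fin.ext (by simp)))
  · intro k hk
    rw [if_neg (fun h => hk (Fin.ext (by simpa using h))), zero_mul]

lemma mul_one' (F : MLS B) : F.mul MLS.one = F := by
  funext n b
  simp only [MLS.mul, MLS.one]
  rw [Fintype.sum_eq_single (Fin.last n)]
  · simp only [Fin.val_last, Nat.sub_self]
    rw [if_pos trivial, mul_one]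
    exact congr_arity F rfl _ _ (fun i hm hn => congrArg b (Fin.ext (by simp)))
  · intro k hk
    have hne : n - (k : ℕ) ≠ 0 := by
      have h1 := k.isLt
      have h2 : (k : ℕ) ≠ n := fun h => hk (Fin.ext (by simpa using h))
      omega
    rw [if_neg hne, mul_zero]

lemma sigma_fin_ext {n : ℕ} {f : Fin n → ℕ} {p q : Σ i : Fin n, Fin (f i)}
    (h1 : (p.1 : ℕ) = (q.1 : ℕ)) (h2 : (p.2 : ℕ) = (q.2 : ℕ)) : p = q := by
  obtain ⟨⟨a, ha⟩, ⟨c, hc⟩⟩ := p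
  obtain ⟨⟨a', ha'⟩, ⟨c', hc'⟩⟩ := q
  dsimp at h1 h2
  subst h1
  subst h2
  rfl

lemma mul_assoc' (F G H : MLS B) : (F.mul G).mul H = F.mul (G.mul H) := by
  funext n b
  simp only [MLS.mul, Finset.sum_mul, Finset.mul_sum]
  rw [Finset.sum_sigma', Finset.sum_sigma']
  refine Finset.sum_nbij'
    (fun p => ⟨⟨(p.2 : ℕ), by have := p.1.isLt; have := p.2.isLt; omega⟩,
               ⟨(p.1 : ℕ) - (p.2 : ℕ), by
                  have h1 := p.1.isLt; have h2 := p.2.isLt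
                  show (p.1 : ℕ) - (p.2 : ℕ) < n - (p.2 : ℕ) + 1; omega⟩⟩)
    (fun p => ⟨⟨(p.1 : ℕ) + (p.2 : ℕ), by have := p.1.isLt; have := p.2.isLt; omega⟩,
               ⟨(p.1 : ℕ), by
                  show (p.1 : ℕ) < (p.1 : ℕ) + (p.2 : ℕ) + 1; omega⟩⟩)
    (by intros; simp) (by intros; simp)
    (fun p _ => sigma_fin_ext (by have := p.2.isLt; dsimp; omega) (by dsimp))
    (fun p _ => sigma_fin_ext (by dsimp) (by have := p.2.isLt; dsimp; omega))
    ?_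
  rintro ⟨j, k⟩ -
  have hj := j.isLt
  have hk := k.isLt
  dsimp only
  rw [mul_assoc]
  refine congrArg₂ (· * ·) ?_ (congrArg₂ (· * ·) ?_ ?_)
  · exact congr_arity F rfl _ _ (fun i hm hn => congrArg b (Fin.ext (by simp)))
  · exact congr_arity G rfl _ _ (fun i hm hn => congrArg b (Fin.ext (by simp)))
  · exact congr_arity H (by omega) _ _ (fun i hm hn => congrArg b (Fin.ext (by simp; omega)))

lemma idS_mul_apply (F : MLS B) (n : ℕ) (b : Fin (n + 1) → B) :
    (MLS.idS.mul F) (n + 1) b = b 0 * F n (fun i => b i.succ) := by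
  have h1 : ((1 : Fin (n + 2)) : ℕ) = 1 := by simp
  simp only [MLS.mul, MLS.idS]
  rw [Fintype.sum_eq_single (1 : Fin (n + 2))]
  · rw [dif_pos h1]
    refine congrArg₂ (· * ·) (congrArg b (Fin.ext (by simp))) ?_
    refine congr_arity F (by rw [h1]; omega) _ _ (fun i hm hn => congrArg b (Fin.ext ?_))
    simp [h1]
    omega
  · intro k hk
    rw [dif_neg (fun h => hk (Fin.ext (by rw [h, h1]))), zero_mul]

lemma idS_mul_cancel {F G : MLS B} (h : MLS.idS.mul F = MLS.idS.mul G) : F = G := by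
  funext n b
  have h' := congrFun (congrFun h (n + 1)) (Fin.cons 1 b)
  rw [idS_mul_apply, idS_mul_apply] at h'
  simpa only [Fin.cons_succ, Fin.cons_zero, one_mul] using h'

lemma comp_add' (F G H : MLS B) : (F.add G).comp H = (F.comp H).add (G.comp H) := by
  funext n b
  simp only [MLS.comp, MLS.add, Finset.sum_add_distrib]

lemma one_comp (H : MLS B) : MLS.one.comp H = MLS.one := by
  funext n b
  rcases Nat.eq_zero_or_pos n with hn | hn
  · subst hn
    have huniq : ∀ c : Composition 0, c = Composition.ones 0 := by
      intro c
      ext1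
      have h1 : c.blocks = [] := by
        rcases hbl : c.blocks with _ | ⟨a, l⟩
        · rfl
        · exfalso
          have ha := c.blocks_pos (hbl ▸ (List.mem_cons_self : a ∈ a :: l))
          have hs := c.blocks_sum
          rw [hbl] at hs
          simp at hs
          omega
      simp [h1, Composition.ones]
    simp only [MLS.comp, MLS.one]
    rw [Fintype.sum_eq_single (Composition.ones 0)]
    · rw [if_pos (by simp)]
      simp
    · intro c hc
      exact absurd (huniq c) hc
  · simp only [MLS.comp, MLS.one]
    rw [if_neg (by omega), Finset.sum_eq_zero]
    intro c _
    rw [if_neg (by have := c.length_pos_of_pos hn; omega)]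

lemma take_drop_sum {n : ℕ} (c : Composition n) (j : ℕ) :
    (c.blocks.take j).sum + (c.blocks.drop j).sum = n := by
  rw [← List.sum_append, List.take_append_drop, c.blocks_sum]

def takeComp {n : ℕ} (c : Composition n) (j : ℕ) : Composition (c.blocks.take j).sum :=
  ⟨c.blocks.take j, fun hi => c.blocks_pos (List.mem_of_mem_take hi), rfl⟩

def dropComp {n : ℕ} (c : Composition n) (j : ℕ) : Composition (n - (c.blocks.take j).sum) :=
  ⟨c.blocks.drop j, fun hi => c.blocks_pos (List.mem_of_mem_drop hi), by
    have := take_drop_sum c j; omega⟩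

def appendComp {a b n : ℕ} (c₁ : Composition a) (c₂ : Composition b) (h : a + b = n) :
    Composition n :=
  ⟨c₁.blocks ++ c₂.blocks, fun hi => by
      rcases List.mem_append.mp hi with h' | h'
      · exact c₁.blocks_pos h'
      · exact c₂.blocks_pos h', by
    rw [List.sum_append, c₁.blocks_sum, c₂.blocks_sum, h]⟩

lemma sigma_comp_fin_ext {n : ℕ} {p q : Σ c : Composition n, Fin (c.length + 1)}
    (h1 : p.1.blocks = q.1.blocks) (h2 : (p.2 : ℕ) = (q.2 : ℕ)) : p = q := by
  obtain ⟨⟨bl, hb1, hb2⟩, ⟨j, hj⟩⟩ := p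
  obtain ⟨⟨bl', hb1', hb2'⟩, ⟨j', hj'⟩⟩ := q
  dsimp at h1 h2
  subst h1
  subst h2
  rfl

lemma sigma_fin_compPair_ext {n : ℕ}
    {p q : Σ k : Fin (n + 1), Composition (n - (k : ℕ)) × Composition (k : ℕ)}
    (h1 : (p.1 : ℕ) = (q.1 : ℕ)) (h2 : p.2.1.blocks = q.2.1.blocks)
    (h3 : p.2.2.blocks = q.2.2.blocks) : p = q := by
  obtain ⟨⟨k, hk⟩, ⟨⟨bl1, h11, h12⟩, ⟨bl2, h21, h22⟩⟩⟩ := p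
  obtain ⟨⟨k', hk'⟩, ⟨⟨bl1', h11', h12'⟩, ⟨bl2', h21', h22'⟩⟩⟩ := q
  dsimp at h1 h2 h3
  subst h1
  subst h2
  subst h3
  rfl

lemma comp_mul' (F G H : MLS B) : (F.mul G).comp H = (F.comp H).mul (G.comp H) := by
  funext n b
  simp only [MLS.comp, MLS.mul]
  simp only [Finset.sum_mul, Finset.mul_sum]
  simp only [← Finset.sum_product']
  rw [Finset.sum_sigma', Finset.sum_sigma']
  refine Finset.sum_nbij'
    (fun p => ⟨⟨(p.1.blocks.take (p.2 : ℕ)).sum, by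
        have := take_drop_sum p.1 (p.2 : ℕ); omega⟩,
      (dropComp p.1 (p.2 : ℕ), takeComp p.1 (p.2 : ℕ))⟩)
    (fun q => ⟨appendComp q.2.2 q.2.1 (by have := q.1.isLt; omega),
      ⟨q.2.2.length, by
        show q.2.2.length < (appendComp q.2.2 q.2.1 (by have := q.1.isLt; omega)).length + 1
        simp only [appendComp, Composition.length, List.length_append]; omega⟩⟩)
    (by intros; simp) (by intros; simp)
    ?_ ?_ ?_
  · rintro ⟨c, j⟩ -
    have hj := j.isLt
    have hlen : c.length = c.blocks.length := rfl
    refine sigma_comp_fin_ext ?_ ?_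
    · show (c.blocks.take (j : ℕ) ++ c.blocks.drop (j : ℕ)) = c.blocks
      exact List.take_append_drop _ _
    · show (takeComp c (j : ℕ)).length = (j : ℕ)
      simp only [takeComp, Composition.length, List.length_take]
      omega
  · rintro ⟨k, c₂, c₁⟩ -
    have hk := k.isLt
    refine sigma_fin_compPair_ext ?_ ?_ ?_
    · show ((c₁.blocks ++ c₂.blocks).take c₁.blocks.length).sum = (k : ℕ)
      rw [List.take_left, c₁.blocks_sum]
    · show ((c₁.blocks ++ c₂.blocks).drop c₁.blocks.length) = c₂.blocks
      rw [List.drop_left]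
    · show ((c₁.blocks ++ c₂.blocks).take c₁.blocks.length) = c₁.blocks
      rw [List.take_left]
  · rintro ⟨c, j⟩ -
    have hj := j.isLt
    have hlen : c.length = c.blocks.length := rfl
    dsimp only
    refine congrArg₂ (· * ·) ?_ ?_
    · refine congr_arity F ?_ _ _ ?_
      · simp only [takeComp, Composition.length, List.length_take]
        omega
      · intro i him hin
        refine congr_arity H ?_ _ _ ?_
        · show c.blocksFun (Fin.castLE _ ⟨i, him⟩) = (takeComp c (j : ℕ)).blocksFun ⟨i, hin⟩
          simp only [Composition.blocksFun, takeComp, List.get_eq_getElem, List.getElem_take,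
            Fin.coe_castLE]
        · intro s hsm hsn
          refine congrArg b (Fin.ext ?_)
          simp only [Composition.coe_embedding, Fin.coe_castLE]
          have hsz : (takeComp c (j : ℕ)).sizeUpTo i = c.sizeUpTo i := by
            simp only [Composition.sizeUpTo, takeComp, List.take_take]
            rw [min_eq_left (by omega)]
          omega
    · refine congr_arity G ?_ _ _ ?_
      · simp only [dropComp, Composition.length, List.length_drop]
      · intro i him hin
        dsimp only
        refine congr_arity H ?_ _ _ ?_
        · show c.blocksFun ⟨(j : ℕ) + i, by omega⟩ = (dropComp c (j : ℕ)).blocksFun ⟨i, hin⟩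
          simp only [Composition.blocksFun, dropComp, List.get_eq_getElem, List.getElem_drop]
        · intro s hsm hsn
          refine congrArg b (Fin.ext ?_)
          simp only [Composition.coe_embedding, Fin.coe_castLE]
          have hsz : c.sizeUpTo ((j : ℕ) + i) =
              (c.blocks.take (j : ℕ)).sum + (dropComp c (j : ℕ)).sizeUpTo i := by
            simp only [Composition.sizeUpTo, dropComp]
            rw [List.take_add, List.sum_append]
          omega

end MLS

end Aux

/-- for `x, y` free with amalgamation over `B`,
`Φ^{y→}∘χ_{xy} = S_y⁻¹·(1+I)`. -/
theorem ovps_phiYTo_comp_chi {R A B : Type*} [CommRing R] [Ring A] [Algebra R A]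
    [Ring B] [Algebra R B] (P : OVPS R A B) (x y : A)
    (hx : IsUnit (P.E x)) (hy : IsUnit (P.E y))
    (Cy Sy Syinv χ : MLS B)
    (hCy : MLS.IsMultilinear R Cy) (hSy : MLS.IsMultilinear R Sy)
    (hSyinvm : MLS.IsMultilinear R Syinv) (hχm : MLS.IsMultilinear R χ)
    -- freeness relations Ψ2 and Ψ3
    (hΨ2 : P.momentSeries (x * y) =
      (P.momentSeriesToX x y).mul (Cy.comp (MLS.idS.mul (P.momentSeriesToX x y))))
    (hΨ3 : P.momentSeriesYTo x y =
      (Cy.comp (MLS.idS.mul (P.momentSeriesToX x y))).mul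
        (MLS.one.add (MLS.idS.mul (P.momentSeries (x * y)))))
    -- `χ = χ_{xy}` is the compositional inverse of `I·Φ_{xy}`
    (hχ0 : MLS.const χ = 0)
    (hχ1 : (MLS.idS.mul (P.momentSeries (x * y))).comp χ = MLS.idS)
    (hχ2 : χ.comp (MLS.idS.mul (P.momentSeries (x * y))) = MLS.idS)
    -- `(I·Φ^{→x})∘χ_{xy} = I·S_y`
    (hΦχ : (MLS.idS.mul (P.momentSeriesToX x y)).comp χ = MLS.idS.mul Sy)
    -- `S_y⁻¹` is the multiplicative inverse of `S_y`
    (hSyinv1 : Sy.mul Syinv = MLS.one) (hSyinv2 : Syinv.mul Sy = MLS.one) :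
    (P.momentSeriesYTo x y).comp χ = Syinv.mul (MLS.one.add MLS.idS) := by
  classical
  set Φ := P.momentSeries (x * y) with hΦdef
  set Φx := P.momentSeriesToX x y with hΦxdef
  set G := Cy.comp (MLS.idS.mul Φx) with hGdef
  have h1 : MLS.idS.mul (Sy.mul (G.comp χ)) = MLS.idS.mul MLS.one := by
    rw [MLS.mul_one']
    calc MLS.idS.mul (Sy.mul (G.comp χ))
        = (MLS.idS.mul Sy).mul (G.comp χ) := (MLS.mul_assoc' _ _ _).symm
      _ = ((MLS.idS.mul Φx).comp χ).mul (G.comp χ) := by rw [hΦχ]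
      _ = ((MLS.idS.mul Φx).mul G).comp χ := (MLS.comp_mul' _ _ _).symm
      _ = (MLS.idS.mul (Φx.mul G)).comp χ := by rw [MLS.mul_assoc']
      _ = (MLS.idS.mul Φ).comp χ := by rw [← hΨ2]
      _ = MLS.idS := hχ1
  have h2 : Sy.mul (G.comp χ) = MLS.one := MLS.idS_mul_cancel h1
  have h3 : G.comp χ = Syinv := by
    calc G.comp χ = MLS.one.mul (G.comp χ) := (MLS.one_mul' _).symm
      _ = (Syinv.mul Sy).mul (G.comp χ) := by rw [hSyinv2]
      _ = Syinv.mul (Sy.mul (G.comp χ)) := MLS.mul_assoc' _ _ _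
      _ = Syinv.mul MLS.one := by rw [h2]
      _ = Syinv := MLS.mul_one' _
  rw [hΨ3, MLS.comp_mul', h3]
  congr 1
  rw [MLS.comp_add', MLS.one_comp, hχ1]
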